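/- arXiv:1511.01148 — 3 statements merged into one kernel-verified Lean document; each statement's English description precedes it below -/
import Mathlib

section
/- For each natural number n, the number of monic square-free polynomials of degree n ≥ 2 in F_q[T] equals q^n (1 - 1/q). -/
open Polynomial Filter Asymptotics
open scoped Classical

variable {Fq : Type} [Field Fq] [Fintype Fq]

/-- Norm of a polynomial: `|f| = q^(deg f)` for `f ≠ 0`, and `|0| = 0`. -/
noncomputable def pnorm (f : Polynomial Fq) : ℝ :=
  if f = 0 then 0 else (Fintype.card Fq : ℝ) ^ f.natDegree

/-- Monic polynomials of degree `n`. -/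
def monicDeg (Fq : Type) [Field Fq] (n : ℕ) : Set (Polynomial Fq) :=
  {f | f.Monic ∧ f.natDegree = n}

/-- `H_{2g+1}`: monic square-free polynomials of degree `2g+1`. -/
def Hset (Fq : Type) [Field Fq] (g : ℕ) : Set (Polynomial Fq) :=
  {D | D.Monic ∧ Squarefree D ∧ D.natDegree = 2 * g + 1}

/-- Quadratic residue symbol `(D/P)` for an irreducible `P`. -/
noncomputable def quadCharP (D P : Polynomial Fq) : ℤ :=
  if P ∣ D then 0 else if ∃ x : Polynomial Fq, P ∣ (x ^ 2 - D) then 1 else -1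

/-- Jacobi-type quadratic residue symbol `(D/n)`, extended multiplicatively over
irreducible factors of `n`. -/
noncomputable def jacobi (D n : Polynomial Fq) : ℤ :=
  ((UniqueFactorizationMonoid.factors n).map (quadCharP D)).prod

/-- The quadratic Dirichlet L-function `L(s, χ_D)` as a finite sum
`Σ_{n=0}^{deg D - 1} (Σ_{f monic, deg f = n} χ_D(f)) q^{-ns}`. -/
noncomputable def Lfun (D : Polynomial Fq) (s : ℂ) : ℂ :=
  ∑ n ∈ Finset.range D.natDegree,
    (∑ᶠ f ∈ monicDeg Fq n, (jacobi D f : ℂ)) * (Fintype.card Fq : ℂ) ^ (-(n : ℂ) * s)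

/-- The central value `L(1/2, χ_D)` as a real number. -/
noncomputable def LhalfR (D : Polynomial Fq) : ℝ :=
  ∑ n ∈ Finset.range D.natDegree,
    (∑ᶠ f ∈ monicDeg Fq n, (jacobi D f : ℝ)) * (Real.sqrt (Fintype.card Fq))⁻¹ ^ n

/-- `a_m = Π_{P | m} |P|/(|P|+1)` over monic irreducible divisors `P` of `m`. -/
noncomputable def am (m : Polynomial Fq) : ℝ :=
  ∏ᶠ (P : Polynomial Fq) (_ : P.Monic ∧ Irreducible P ∧ P ∣ m), pnorm P / (pnorm P + 1)

/-- `d_k(m)`: the number of ordered `k`-tuples of monic polynomials with product `m`. -/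
noncomputable def dfold (k : ℕ) (m : Polynomial Fq) : ℕ :=
  Nat.card {t : Fin k → Polynomial Fq // (∀ i, (t i).Monic) ∧ ∏ i, t i = m}

/-- Möbius function on `F_q[T]`. -/
noncomputable def moebiusP (f : Polynomial Fq) : ℤ :=
  if Squarefree f then (-1) ^ (UniqueFactorizationMonoid.factors f).card else 0

/-- The Dirichlet polynomial `A(D) = Σ_{n monic, deg n ≤ 4g/(15k)} χ_D(n)/√|n|`. -/
noncomputable def AD (k g : ℕ) (D : Polynomial Fq) : ℝ :=
  ∑ᶠ n ∈ {n : Polynomial Fq | n.Monic ∧ n.natDegree ≤ 4 * g / (15 * k)},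
    (jacobi D n : ℝ) / Real.sqrt (pnorm n)

/-! Every monic `f` factors uniquely as `f = b * a ^ 2` with `a`, `b` monic and `b` squarefree.
Sorting the `q ^ n` monic polynomials of degree `n` by `k = deg a` gives
`q ^ n = ∑ k, S (n - 2k) * q ^ k`, where `S m` counts monic squarefree polynomials of degree `m`;
the terms with `k ≥ 1` are `q` times the same identity in degree `n - 2`, so
`S n = q ^ n - q ^ (n - 1)`. -/

section SquarefreeMulSq

theorem Prime.dvd_of_squarefree_mul_sq_eq {α : Type*} [CommMonoidWithZero α] [IsCancelMulZero α]
    {p a₁ a₂ b₁ b₂ : α} (hp : Prime p) (hb₁ : Squarefree b₁) (h : b₁ * a₁ ^ 2 = b₂ * a₂ ^ 2)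
    (hpa₂ : p ∣ a₂) : p ∣ a₁ := by
  by_contra hpa₁
  have hp_sq : p ^ 2 ∣ b₁ := hp.pow_dvd_of_dvd_mul_right 2 (fun h' => hpa₁ (hp.dvd_of_dvd_pow h'))
    (h ▸ dvd_mul_of_dvd_right (pow_dvd_pow_of_dvd hpa₂ 2) b₂)
  exact hp.not_isUnit (hb₁ p (sq p ▸ hp_sq))

variable {α : Type*} [CommMonoidWithZero α] [UniqueFactorizationMonoid α]

theorem exists_squarefree_mul_sq_eq (x : α) : ∃ b a : α, Squarefree b ∧ b * a ^ 2 = x := by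
  induction x using UniqueFactorizationMonoid.induction_on_prime with
  | h₁ => exact ⟨1, 0, squarefree_one, by simp⟩
  | h₂ u hu => exact ⟨u, 1, hu.squarefree, by simp⟩
  | h₃ x p _ hp ih =>
    obtain ⟨b, a, hb, rfl⟩ := ih
    by_cases hpb : p ∣ b
    · obtain ⟨c, rfl⟩ := hpb
      exact ⟨c, p * a, hb.squarefree_of_dvd (dvd_mul_left c p), by
        rw [mul_pow, sq p]; ac_rfl⟩
    · refine ⟨p * b, a, ?_, mul_assoc p b _⟩
      exact squarefree_mul_iff.2
        ⟨hp.irreducible.isRelPrime_iff_not_dvd.2 hpb, hp.squarefree, hb⟩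

theorem dvd_of_squarefree_mul_sq_eq {a₁ a₂ b₁ b₂ : α} (hb₁ : Squarefree b₁)
    (h : b₁ * a₁ ^ 2 = b₂ * a₂ ^ 2) : a₂ ∣ a₁ := by
  nontriviality α
  induction a₂ using UniqueFactorizationMonoid.induction_on_prime generalizing a₁ with
  | h₁ =>
    have ha₁ : a₁ = 0 := by simpa [hb₁.ne_zero] using h
    simp [ha₁]
  | h₂ u hu => exact hu.dvd
  | h₃ c p _ hp ih =>
    obtain ⟨d, rfl⟩ := hp.dvd_of_squarefree_mul_sq_eq hb₁ h (dvd_mul_right p c)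
    refine mul_dvd_mul_left p (ih (mul_left_cancel₀ (pow_ne_zero 2 hp.ne_zero) ?_))
    rwa [mul_pow, mul_pow, mul_left_comm, mul_left_comm b₂] at h

end SquarefreeMulSq

namespace Polynomial.Monic

variable {K : Type*} [Field K]

theorem exists_squarefree_mul_sq_eq {f : K[X]} (hf : f.Monic) :
    ∃ b a : K[X], b.Monic ∧ a.Monic ∧ Squarefree b ∧ b * a ^ 2 = f := by
  obtain ⟨b, a, hb, rfl⟩ := _root_.exists_squarefree_mul_sq_eq f
  have hb₀ : b ≠ 0 := hb.ne_zero
  have ha₀ : a ≠ 0 := fun ha => hf.ne_zero (by simp [ha])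
  have hb' := monic_mul_leadingCoeff_inv hb₀
  have ha' := monic_mul_leadingCoeff_inv ha₀
  have hunit : ∀ {g : K[X]}, g ≠ 0 → Associated (g * C g.leadingCoeff⁻¹) g := fun hg =>
    associated_mul_unit_left _ _ (isUnit_C.2 (inv_ne_zero (leadingCoeff_ne_zero.2 hg)).isUnit)
  refine ⟨_, _, hb', ha', (hunit hb₀).squarefree_iff.2 hb, eq_of_monic_of_associated
    (hb'.mul (ha'.pow 2)) hf ((hunit hb₀).mul_mul ((hunit ha₀).pow_pow))⟩

theorem eq_of_squarefree_mul_sq_eq {a₁ a₂ b₁ b₂ : K[X]} (ha₁ : a₁.Monic) (ha₂ : a₂.Monic)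
    (hb₁ : Squarefree b₁) (hb₂ : Squarefree b₂) (h : b₁ * a₁ ^ 2 = b₂ * a₂ ^ 2) : a₁ = a₂ :=
  eq_of_monic_of_associated ha₁ ha₂ <| associated_of_dvd_dvd
    (dvd_of_squarefree_mul_sq_eq hb₂ h.symm) (dvd_of_squarefree_mul_sq_eq hb₁ h)

end Polynomial.Monic

section Counting

variable (K : Type) [Field K]

def squarefreeMonicDeg (n : ℕ) : Set K[X] :=
  {f | f.Monic ∧ Squarefree f ∧ f.natDegree = n}

theorem squarefreeMonicDeg_subset_monicDeg (n : ℕ) : squarefreeMonicDeg K n ⊆ monicDeg K n :=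
  fun _ hf => ⟨hf.1, hf.2.2⟩

noncomputable def squarefreeMulSq (n : ℕ) :
    (Σ k : Fin (n / 2 + 1), squarefreeMonicDeg K (n - 2 * k) × monicDeg K k) → monicDeg K n :=
  fun ⟨k, b, a⟩ => ⟨b.1 * a.1 ^ 2, b.2.1.mul (a.2.1.pow 2), by
    rw [b.2.1.natDegree_mul (a.2.1.pow 2), natDegree_pow, b.2.2.2, a.2.2]
    have := k.2
    omega⟩

theorem squarefreeMulSq_bijective (n : ℕ) : Function.Bijective (squarefreeMulSq K n) := by
  constructor
  · rintro ⟨k₁, b₁, a₁⟩ ⟨k₂, b₂, a₂⟩ h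
    have h' : b₁.1 * a₁.1 ^ 2 = b₂.1 * a₂.1 ^ 2 := congrArg Subtype.val h
    have ha : a₁.1 = a₂.1 := a₁.2.1.eq_of_squarefree_mul_sq_eq a₂.2.1 b₁.2.2.1 b₂.2.2.1 h'
    obtain rfl : k₁ = k₂ := Fin.ext (by rw [← a₁.2.2, ← a₂.2.2, ha])
    have hb : b₁.1 = b₂.1 := mul_right_cancel₀ (pow_ne_zero 2 a₂.2.1.ne_zero) (ha ▸ h')
    rw [Subtype.ext ha, Subtype.ext hb]
  · rintro ⟨f, hf, rfl⟩
    obtain ⟨b, a, hb, ha, hb_sq, rfl⟩ := hf.exists_squarefree_mul_sq_eq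
    have hdeg : (b * a ^ 2).natDegree = b.natDegree + 2 * a.natDegree := by
      rw [hb.natDegree_mul (ha.pow 2), natDegree_pow, mul_comm]
    exact ⟨⟨⟨a.natDegree, by omega⟩, ⟨b, hb, hb_sq, by simp only; omega⟩, ⟨a, ha, rfl⟩⟩, rfl⟩

variable [Fintype K]

noncomputable def monicDegEquiv (n : ℕ) : monicDeg K n ≃ (Fin n → K) :=
  (monicEquivDegreeLT n).trans (degreeLTEquiv K n).toEquiv

theorem ncard_monicDeg (n : ℕ) : (monicDeg K n).ncard = Fintype.card K ^ n := by
  rw [← Nat.card_coe_set_eq, Nat.card_congr (monicDegEquiv K n), Nat.card_fun,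
    Nat.card_eq_fintype_card, Nat.card_fin]

instance (n : ℕ) : Finite (monicDeg K n) :=
  Finite.of_equiv _ (monicDegEquiv K n).symm

instance (n : ℕ) : Finite (squarefreeMonicDeg K n) :=
  Finite.Set.subset _ (squarefreeMonicDeg_subset_monicDeg K n)

theorem card_pow_eq_sum_ncard_squarefreeMonicDeg (n : ℕ) :
    Fintype.card K ^ n = ∑ k ∈ Finset.range (n / 2 + 1),
      (squarefreeMonicDeg K (n - 2 * k)).ncard * Fintype.card K ^ k := by
  rw [← ncard_monicDeg, ← Nat.card_coe_set_eq, ← Nat.card_eq_of_bijective _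
    (squarefreeMulSq_bijective K n), Nat.card_sigma, ← Fin.sum_univ_eq_sum_range]
  simp only [Nat.card_prod, Nat.card_coe_set_eq, ncard_monicDeg]

theorem ncard_squarefreeMonicDeg_add_card_pow (n : ℕ) :
    (squarefreeMonicDeg K (n + 2)).ncard + Fintype.card K ^ (n + 1) =
      Fintype.card K ^ (n + 2) := by
  have h_tail : ∑ k ∈ Finset.range (n / 2 + 1),
      (squarefreeMonicDeg K (n + 2 - 2 * (k + 1))).ncard * Fintype.card K ^ (k + 1) =
        Fintype.card K ^ (n + 1) := by
    rw [pow_succ _ n, card_pow_eq_sum_ncard_squarefreeMonicDeg K n, Finset.sum_mul]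
    refine Finset.sum_congr rfl fun k _ => ?_
    rw [show n + 2 - 2 * (k + 1) = n - 2 * k by omega, pow_succ, mul_assoc]
  rw [card_pow_eq_sum_ncard_squarefreeMonicDeg K (n + 2), show (n + 2) / 2 = n / 2 + 1 by omega,
    Finset.sum_range_succ', h_tail, mul_zero, Nat.sub_zero, pow_zero, mul_one, add_comm]

end Counting

/-- the number of monic square-free polynomials of degree `n ≥ 2`
equals `q^n (1 - 1/q)`. -/
theorem card_monic_squarefree (n : ℕ) (hn : 2 ≤ n) :
    (Set.ncard {f : Polynomial Fq | f.Monic ∧ Squarefree f ∧ f.natDegree = n} : ℝ)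
      = (Fintype.card Fq : ℝ) ^ n * (1 - 1 / (Fintype.card Fq : ℝ)) := by
  obtain ⟨m, rfl⟩ := Nat.exists_eq_add_of_le' hn
  have h : ((squarefreeMonicDeg Fq (m + 2)).ncard : ℝ) + (Fintype.card Fq : ℝ) ^ (m + 1) =
      (Fintype.card Fq : ℝ) ^ (m + 2) := by
    exact_mod_cast ncard_squarefreeMonicDeg_add_card_pow Fq m
  have hq : (Fintype.card Fq : ℝ) ≠ 0 := by positivity
  change ((squarefreeMonicDeg Fq (m + 2)).ncard : ℝ) = _
  rw [eq_sub_of_add_eq h]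
  field_simp
  ring
end

section
/- (Prime polynomial theorem) The number π_A(n) of monic irreducible polynomials of degree n in F_q[T] satisfies π_A(n) = q^n/n + O(q^{n/2}/n), where the implied constant is absolute. -/
open Polynomial Filter Asymptotics
open scoped Classical

variable {Fq : Type} [Field Fq] [Fintype Fq]

/-! `X ^ q ^ n - X` is squarefree, and its monic irreducible factors are exactly the monic
irreducibles whose degree divides `n`; comparing degrees gives Gauss's formula
`q ^ n = ∑_{d ∣ n} d π(d)`. The term `d = n` gives `n π(n) ≤ q ^ n`. Every other divisor has
`d ≤ n / 2` and `d π(d) ≤ q ^ d`, so the remaining terms sum to at most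
`q ^ 0 + ⋯ + q ^ (n / 2) ≤ 2 q ^ (n / 2) ≤ 2 √(q ^ n)`. -/

theorem Nat.le_div_two_of_mem_properDivisors {d n : ℕ} (h : d ∈ n.properDivisors) :
    d ≤ n / 2 := by
  have hdiv : 2 ≤ n / d := Nat.one_lt_div_of_mem_properDivisors h
  rw [Nat.le_div_iff_mul_le two_pos]
  calc d * 2 ≤ d * (n / d) := Nat.mul_le_mul_left d hdiv
    _ = n := Nat.mul_div_cancel' (Nat.mem_properDivisors.mp h).1

theorem Nat.geomSum_range_succ_le {q : ℕ} (hq : 2 ≤ q) (m : ℕ) :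
    ∑ d ∈ Finset.range (m + 1), q ^ d ≤ 2 * q ^ m := by
  rw [Finset.sum_range_succ, two_mul]
  exact Nat.add_le_add_right (Nat.geomSum_lt hq fun _ hk => Finset.mem_range.mp hk).le _

namespace Polynomial

variable {K : Type*} [Field K] [Fintype K]

open UniqueFactorizationMonoid

theorem finite_setOf_monic_irreducible_natDegree_eq (d : ℕ) :
    {P : K[X] | P.Monic ∧ Irreducible P ∧ P.natDegree = d}.Finite := by
  have : Finite (degreeLT K (d + 1)) :=
    Finite.of_equiv _ (degreeLTEquiv K (d + 1)).toEquiv.symm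
  refine (Set.finite_coe_iff.mp this).subset fun P ⟨hm, _, hd⟩ => ?_
  rw [SetLike.mem_coe, mem_degreeLT, ← natDegree_lt_iff_degree_lt hm.ne_zero]
  omega

variable (K) in
noncomputable def monicIrreducibles (d : ℕ) : Finset K[X] :=
  (finite_setOf_monic_irreducible_natDegree_eq d).toFinset

theorem mem_monicIrreducibles {d : ℕ} {P : K[X]} :
    P ∈ monicIrreducibles K d ↔ P.Monic ∧ Irreducible P ∧ P.natDegree = d :=
  Set.Finite.mem_toFinset _

theorem monicIrreducibles_zero : monicIrreducibles K 0 = ∅ :=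
  Finset.eq_empty_of_forall_notMem fun _ hP =>
    let ⟨hm, hi, hd⟩ := mem_monicIrreducibles.mp hP
    hi.not_isUnit (hm.natDegree_eq_zero.mp hd ▸ isUnit_one)

theorem squarefree_X_pow_card_pow_sub_X {n : ℕ} (hn : n ≠ 0) :
    Squarefree (X ^ Fintype.card K ^ n - X : K[X]) :=
  (galois_poly_separable (ringChar K) _
    ((CharP.cast_eq_zero_iff K _ _).mp (FiniteField.cast_card_eq_zero K) |>.trans
      (dvd_pow_self _ hn))).squarefree

theorem normalizedFactors_X_pow_card_pow_sub_X {n : ℕ} (hn : n ≠ 0) :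
    normalizedFactors (X ^ Fintype.card K ^ n - X : K[X]) =
      (n.divisors.biUnion (monicIrreducibles K)).val := by
  have hf0 : (X ^ Fintype.card K ^ n - X : K[X]) ≠ 0 :=
    FiniteField.X_pow_card_pow_sub_X_ne_zero K hn Fintype.one_lt_card
  refine (Multiset.Nodup.ext ((squarefree_iff_nodup_normalizedFactors hf0).mp
    (squarefree_X_pow_card_pow_sub_X hn)) (Finset.nodup _)).mpr fun P => ?_
  rw [Polynomial.mem_normalizedFactors_iff hf0, Finset.mem_val, Finset.mem_biUnion]
  simp only [Nat.mem_divisors, mem_monicIrreducibles]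
  constructor
  · rintro ⟨hi, hm, hdvd⟩
    rw [← Nat.card_eq_fintype_card, ← hi.natDegree_dvd_iff_dvd_X_pow_card_pow_sub_X] at hdvd
    exact ⟨P.natDegree, ⟨hdvd, hn⟩, hm, hi, rfl⟩
  · rintro ⟨d, ⟨hdvd, -⟩, hm, hi, rfl⟩
    rw [← Nat.card_eq_fintype_card, ← hi.natDegree_dvd_iff_dvd_X_pow_card_pow_sub_X]
    exact ⟨hi, hm, hdvd⟩

theorem card_pow_eq_sum_divisors_mul_card_monicIrreducibles {n : ℕ} (hn : n ≠ 0) :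
    Fintype.card K ^ n = ∑ d ∈ n.divisors, d * (monicIrreducibles K d).card := by
  have hf0 : (X ^ Fintype.card K ^ n - X : K[X]) ≠ 0 :=
    FiniteField.X_pow_card_pow_sub_X_ne_zero K hn Fintype.one_lt_card
  have hdisj : (n.divisors : Set ℕ).PairwiseDisjoint (monicIrreducibles K) :=
    fun d _ e _ hde => Finset.disjoint_left.mpr fun P hPd hPe =>
      hde ((mem_monicIrreducibles.mp hPd).2.2.symm.trans (mem_monicIrreducibles.mp hPe).2.2)
  calc Fintype.card K ^ n
      = (normalizedFactors (X ^ Fintype.card K ^ n - X : K[X])).prod.natDegree := by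
        rw [natDegree_eq_of_degree_eq (degree_eq_degree_of_associated
          (prod_normalizedFactors hf0)),
          FiniteField.X_pow_card_pow_sub_X_natDegree_eq K hn Fintype.one_lt_card]
    _ = ∑ P ∈ n.divisors.biUnion (monicIrreducibles K), P.natDegree := by
        rw [natDegree_multiset_prod _ (zero_notMem_normalizedFactors _),
          normalizedFactors_X_pow_card_pow_sub_X hn]
        rfl
    _ = ∑ d ∈ n.divisors, d * (monicIrreducibles K d).card := by
        rw [Finset.sum_biUnion hdisj]
        refine Finset.sum_congr rfl fun d _ => ?_
        rw [Finset.sum_congr rfl fun P hP => (mem_monicIrreducibles.mp hP).2.2, Finset.sum_const,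
          smul_eq_mul, mul_comm]

theorem mul_card_monicIrreducibles_le (n : ℕ) :
    n * (monicIrreducibles K n).card ≤ Fintype.card K ^ n := by
  rcases eq_or_ne n 0 with rfl | hn
  · simp
  rw [card_pow_eq_sum_divisors_mul_card_monicIrreducibles hn]
  exact Finset.single_le_sum (f := fun d => d * (monicIrreducibles K d).card)
    (fun _ _ => Nat.zero_le _) (Nat.mem_divisors_self n hn)

theorem card_pow_le_mul_card_monicIrreducibles_add (n : ℕ) :
    Fintype.card K ^ n ≤ n * (monicIrreducibles K n).card + 2 * Fintype.card K ^ (n / 2) := by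
  rcases eq_or_ne n 0 with rfl | hn
  · simp
  rw [card_pow_eq_sum_divisors_mul_card_monicIrreducibles hn, ← Nat.cons_self_properDivisors hn,
    Finset.sum_cons]
  refine Nat.add_le_add_left ?_ _
  calc ∑ d ∈ n.properDivisors, d * (monicIrreducibles K d).card
      ≤ ∑ d ∈ n.properDivisors, Fintype.card K ^ d :=
        Finset.sum_le_sum fun d _ => mul_card_monicIrreducibles_le d
    _ ≤ ∑ d ∈ Finset.range (n / 2 + 1), Fintype.card K ^ d :=
        Finset.sum_le_sum_of_subset fun d hd =>
          Finset.mem_range_succ_iff.mpr (Nat.le_div_two_of_mem_properDivisors hd)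
    _ ≤ 2 * Fintype.card K ^ (n / 2) := Nat.geomSum_range_succ_le Fintype.one_lt_card _

theorem abs_card_monicIrreducibles_sub_le (n : ℕ) :
    |((monicIrreducibles K n).card : ℝ) - (Fintype.card K : ℝ) ^ n / n| ≤
      2 * Real.sqrt ((Fintype.card K : ℝ) ^ n) / n := by
  rcases eq_or_ne n 0 with rfl | hn
  · simp [monicIrreducibles_zero]
  have hn' : (0 : ℝ) < n := by positivity
  have hupper : (n * (monicIrreducibles K n).card : ℝ) ≤ (Fintype.card K : ℝ) ^ n := by
    exact_mod_cast mul_card_monicIrreducibles_le n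
  have hlower : (Fintype.card K : ℝ) ^ n ≤
      n * (monicIrreducibles K n).card + 2 * (Fintype.card K : ℝ) ^ (n / 2) := by
    exact_mod_cast card_pow_le_mul_card_monicIrreducibles_add n
  have hsqrt : (Fintype.card K : ℝ) ^ (n / 2) ≤ Real.sqrt ((Fintype.card K : ℝ) ^ n) := by
    have hq : (1 : ℝ) ≤ Fintype.card K := by exact_mod_cast Fintype.card_pos
    rw [Real.le_sqrt (by positivity) (by positivity), ← pow_mul]
    exact pow_le_pow_right₀ hq (Nat.div_mul_le_self n 2)
  rw [sub_div' hn'.ne', abs_div, abs_of_pos hn']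
  gcongr
  rw [abs_le]
  constructor <;> linarith

end Polynomial

/-- Prime polynomial theorem: `π_A(n) = q^n/n + O(q^{n/2}/n)` with an
absolute implied constant. -/
theorem prime_polynomial_theorem :
    ∃ C : ℝ, 0 < C ∧ ∀ (Fq : Type) [Field Fq] [Fintype Fq] (n : ℕ),
      |(Set.ncard {P : Polynomial Fq | P.Monic ∧ Irreducible P ∧ P.natDegree = n} : ℝ)
          - (Fintype.card Fq : ℝ) ^ n / n|
        ≤ C * Real.sqrt ((Fintype.card Fq : ℝ) ^ n) / n := by
  refine ⟨2, two_pos, fun Fq _ _ n => ?_⟩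
  rw [Set.ncard_eq_toFinset_card _ (finite_setOf_monic_irreducible_natDegree_eq n)]
  exact abs_card_monicIrreducibles_sub_le n
end

section
/- Let r, h be monic polynomials in F_q[T] with r square-free, and let a_m = Π_{P | m} |P|/(|P|+1). Then as g → ∞ (with deg r ≤ (k-1)x bounded relative to g), Σ_{l monic, deg l ≤ (g - deg r)/2} a_{rhl}/|l| ∼ C(r,h) a_{rh} g for some positive constant C(r,h) bounded away from 0 uniformly. -/
/-!
Write `w = r h`. For monic `l`, `a_{wl} = a_w ∏_{P ∣ l, P ∤ w} |P|/(|P|+1)`, and expanding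
`|P|/(|P|+1) = 1 - 1/(|P|+1)` turns the product into a sum over sets `u` of such primes.
Swapping the sums, the average of this product over the `q^n` monic `l` of degree `n` is the
partial sum `∑_{d ≤ n} ε_d` of a series with `|ε_d| ≤ 1/(q^d+1)`: there are at most `q^d`
sets of total degree `d`, each of weight at most `1/(q^d+1)`. So the averages converge to
`c = ∑ ε_d ≥ 1 - 1/3 - 1/2 = 1/6`, and by Cesàro the sum over `deg l ≤ (g - deg r)/2 ≈ g/2`
is `∼ (c/2) a_w g`.
-/

open Polynomial Filter Asymptotics
open scoped Classical

variable {Fq : Type} [Field Fq] [Fintype Fq]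

open Finset
open UniqueFactorizationMonoid (primeFactors normalizedFactors radical)

theorem add_one_le_prod_add_one {ι R : Type*} [CommSemiring R] [PartialOrder R] [IsOrderedRing R]
    {s : Finset ι} (hs : s.Nonempty) {f : ι → R} (hf : ∀ i ∈ s, 0 ≤ f i) :
    ∏ i ∈ s, f i + 1 ≤ ∏ i ∈ s, (f i + 1) := by
  classical
  rw [prod_add_one, ← prod_empty (f := f),
    ← sum_pair (f := fun t => ∏ i ∈ t, f i) hs.ne_empty]
  exact sum_le_sum_of_subset_of_nonneg (by simp [insert_subset_iff])
    fun t ht _ => prod_nonneg fun i hi => hf i (mem_powerset.mp ht hi)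

section PrimeFactors

variable {M : Type*} [CommMonoidWithZero M] [NormalizationMonoid M] [UniqueFactorizationMonoid M]

theorem primeFactors_prod_of_normalized {u : Finset M}
    (hu : ∀ a ∈ u, Irreducible a ∧ normalize a = a) : primeFactors (∏ a ∈ u, a) = u := by
  have hnf : normalizedFactors (∏ a ∈ u, a) = u.val := by
    rw [prod_eq_multiset_prod, Multiset.map_id',
      UniqueFactorizationMonoid.normalizedFactors_prod_eq _ fun a ha => (hu a ha).1]
    exact (Multiset.map_congr rfl fun a ha => (hu a ha).2).trans u.val.map_id'
  rw [← UniqueFactorizationMonoid.toFinset_normalizedFactors, hnf, val_toFinset]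

theorem prod_dvd_iff_subset_primeFactors {u : Finset M}
    (hu : ∀ a ∈ u, Irreducible a ∧ normalize a = a) {b : M} (hb : b ≠ 0) :
    ∏ a ∈ u, a ∣ b ↔ u ⊆ primeFactors b := by
  have hrad : radical (∏ a ∈ u, a) = ∏ a ∈ u, a := by
    rw [radical, primeFactors_prod_of_normalized hu]; rfl
  rw [← hrad, UniqueFactorizationMonoid.radical_dvd_iff_primeFactors_subset hb,
    primeFactors_prod_of_normalized hu]

end PrimeFactors

section PolynomialPrimeFactors

variable {K : Type*} [Field K]

theorem Polynomial.mem_primeFactors_iff {m P : K[X]} (hm : m ≠ 0) :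
    P ∈ primeFactors m ↔ Irreducible P ∧ P.Monic ∧ P ∣ m :=
  UniqueFactorizationMonoid.mem_primeFactors.trans (Polynomial.mem_normalizedFactors_iff hm)

theorem subset_primeFactors_sdiff_iff {w l : K[X]} (hl : l ≠ 0) {u : Finset K[X]}
    (hu : ∀ P ∈ u, P.Monic ∧ Irreducible P ∧ P ∉ primeFactors w) :
    u ⊆ primeFactors l \ primeFactors w ↔ ∏ P ∈ u, P ∣ l := by
  rw [prod_dvd_iff_subset_primeFactors
      (fun P hP => ⟨(hu P hP).2.1, (hu P hP).1.normalize_eq_self⟩) hl,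
    subset_sdiff, and_iff_left (disjoint_left.mpr fun _ hP => (hu _ hP).2.2)]

theorem natDegree_le_natDegree_prod {u : Finset K[X]} (hu : ∀ P ∈ u, P.Monic) {P : K[X]}
    (hP : P ∈ u) : P.natDegree ≤ (∏ Q ∈ u, Q).natDegree :=
  natDegree_le_of_dvd (dvd_prod_of_mem _ hP) (monic_prod_of_monic u id hu).ne_zero

end PolynomialPrimeFactors

theorem summable_of_abs_le_inv_two_pow_add_one {ε : ℕ → ℝ} (h0 : |ε 0| ≤ 1)
    (h : ∀ d, d ≠ 0 → |ε d| ≤ ((2 : ℝ) ^ d + 1)⁻¹) : Summable ε := by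
  refine Summable.of_norm_bounded summable_geometric_two fun d => ?_
  rw [Real.norm_eq_abs, one_div, inv_pow]
  rcases eq_or_ne d 0 with rfl | hd
  · simpa using h0
  · exact (h d hd).trans (by gcongr; linarith)

theorem one_sixth_le_tsum_of_abs_le {ε : ℕ → ℝ} (h0 : ε 0 = 1)
    (h : ∀ d, d ≠ 0 → |ε d| ≤ ((2 : ℝ) ^ d + 1)⁻¹) : 1 / 6 ≤ ∑' d, ε d := by
  have hε := summable_of_abs_le_inv_two_pow_add_one (by simp [h0]) h
  have h1 : -(1 / 3) ≤ ε 1 := by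
    have := neg_abs_le (ε 1) |>.trans' (neg_le_neg (h 1 one_ne_zero))
    norm_num at this ⊢; linarith
  have htail : -(1 / 2) ≤ ∑' d, ε (d + 2) := by
    have hgeo : ∑' d : ℕ, ((1 : ℝ) / 2) ^ (d + 2) = 1 / 2 := by
      simp_rw [pow_add, tsum_mul_right, tsum_geometric_two]; norm_num
    rw [← hgeo, ← tsum_neg]
    refine Summable.tsum_le_tsum (fun d => ?_) (summable_geometric_two.comp_injective
      (add_left_injective 2)).neg ((summable_nat_add_iff 2).mpr hε)
    refine neg_le_of_abs_le ((h _ (by omega)).trans ?_)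
    rw [one_div, inv_pow]
    gcongr
    linarith
  rw [← hε.sum_add_tsum_nat_add 2, sum_range_succ, sum_range_one, h0]
  linarith

theorem sum_range_isEquivalent_of_tendsto {s : ℕ → ℝ} {c : ℝ} (hc : c ≠ 0)
    (hs : Tendsto s atTop (nhds c)) :
    (fun N => ∑ n ∈ range N, s n) ~[atTop] fun N => c * N := by
  refine isEquivalent_of_tendsto_one ?_
  convert hs.cesaro.div_const c using 1
  · funext N
    simp only [Pi.div_apply]
    ring
  · rw [div_self hc]

theorem natCast_sub_div_two_add_one_isEquivalent (k : ℕ) :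
    (fun g : ℕ => (((g - k) / 2 + 1 : ℕ) : ℝ)) ~[atTop] fun g => (g : ℝ) / 2 := by
  have hbounded : ((fun g : ℕ => (((g - k) / 2 + 1 : ℕ) : ℝ)) - fun g : ℕ => (g : ℝ) / 2)
      =O[atTop] fun _ => (1 : ℝ) := by
    refine IsBigO.of_bound (k + 1) (Eventually.of_forall fun g => ?_)
    have hlo : 2 * (((g - k) / 2 : ℕ) : ℝ) ≤ g := by
      exact_mod_cast (by omega : 2 * ((g - k) / 2) ≤ g)
    have hhi : (g : ℝ) ≤ 2 * (((g - k) / 2 : ℕ) : ℝ) + k + 1 := by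
      exact_mod_cast (by omega : g ≤ 2 * ((g - k) / 2) + k + 1)
    simp only [Pi.sub_apply, Real.norm_eq_abs, norm_one, mul_one, abs_le]
    push_cast
    constructor <;> linarith
  refine hbounded.trans_isLittleO ((isLittleO_one_left_iff ℝ).mpr ?_)
  simp only [Real.norm_eq_abs]
  exact tendsto_abs_atTop_atTop.comp (tendsto_natCast_atTop_atTop.atTop_div_const two_pos)

instance (n : ℕ) : Finite (degreeLT Fq n : Set Fq[X]) :=
  .of_equiv _ (degreeLTEquiv Fq n).toEquiv.symm

variable (Fq) in
noncomputable def monicOfDegree (n : ℕ) : Finset Fq[X] :=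
  (Set.toFinite (degreeLT Fq n : Set Fq[X])).toFinset.map (addLeftEmbedding (X ^ n))

variable (Fq) in
noncomputable def monicUpTo (N : ℕ) : Finset Fq[X] :=
  (range (N + 1)).biUnion (monicOfDegree Fq)

theorem mem_monicOfDegree {n : ℕ} {p : Fq[X]} :
    p ∈ monicOfDegree Fq n ↔ p.Monic ∧ p.natDegree = n := by
  simp only [monicOfDegree, Finset.mem_map, Set.Finite.mem_toFinset, SetLike.mem_coe, mem_degreeLT,
    addLeftEmbedding_apply]
  constructor
  · rintro ⟨a, ha, rfl⟩
    refine ⟨monic_X_pow_add ha, ?_⟩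
    rw [natDegree_add_eq_left_of_degree_lt (by rwa [degree_X_pow]), natDegree_X_pow]
  · rintro ⟨hp, rfl⟩
    refine ⟨p - X ^ p.natDegree, ?_, add_sub_cancel _ _⟩
    rw [← degree_eq_natDegree hp.ne_zero]
    exact degree_sub_lt_left (by rw [degree_X_pow, degree_eq_natDegree hp.ne_zero]) hp.ne_zero
      (by rw [hp.leadingCoeff, (monic_X_pow _).leadingCoeff])

theorem mem_monicUpTo {N : ℕ} {p : Fq[X]} : p ∈ monicUpTo Fq N ↔ p.Monic ∧ p.natDegree ≤ N := by
  simp only [monicUpTo, mem_biUnion, mem_range, mem_monicOfDegree]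
  exact ⟨fun ⟨_, hn, hp, hpn⟩ => ⟨hp, by omega⟩, fun ⟨hp, hpN⟩ => ⟨_, by omega, hp, rfl⟩⟩

theorem card_monicOfDegree (n : ℕ) : #(monicOfDegree Fq n) = Fintype.card Fq ^ n := by
  have hcard : Nat.card (degreeLT Fq n : Set Fq[X]) = Nat.card (Fin n → Fq) :=
    Nat.card_congr (degreeLTEquiv Fq n).toEquiv
  rw [monicOfDegree, card_map, ← Set.ncard_eq_toFinset_card _ (Set.toFinite _),
    ← Nat.card_coe_set_eq, hcard, Nat.card_fun, Nat.card_eq_fintype_card,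
    Nat.card_eq_fintype_card, Fintype.card_fin]

theorem filter_dvd_monicOfDegree {m : Fq[X]} (hm : m.Monic) {n : ℕ} (hmn : m.natDegree ≤ n) :
    (monicOfDegree Fq n).filter (m ∣ ·) =
      (monicOfDegree Fq (n - m.natDegree)).image (m * ·) := by
  ext l
  simp only [mem_filter, mem_image, mem_monicOfDegree]
  constructor
  · rintro ⟨⟨hl, rfl⟩, k, rfl⟩
    have hk : k.Monic := hm.of_mul_monic_left hl
    exact ⟨k, ⟨hk, by rw [hm.natDegree_mul hk]; omega⟩, rfl⟩
  · rintro ⟨k, ⟨hk, hkn⟩, rfl⟩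
    exact ⟨⟨hm.mul hk, by rw [hm.natDegree_mul hk]; omega⟩, dvd_mul_right m k⟩

theorem card_filter_dvd_monicOfDegree {m : Fq[X]} (hm : m.Monic) {n : ℕ}
    (hmn : m.natDegree ≤ n) :
    #((monicOfDegree Fq n).filter (m ∣ ·)) = Fintype.card Fq ^ (n - m.natDegree) := by
  rw [filter_dvd_monicOfDegree hm hmn,
    card_image_of_injective _ (mul_right_injective₀ hm.ne_zero), card_monicOfDegree]

theorem pnorm_nonneg (p : Fq[X]) : 0 ≤ pnorm p := by
  unfold pnorm; split_ifs <;> positivity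

theorem pnorm_of_monic {p : Fq[X]} (hp : p.Monic) :
    pnorm p = (Fintype.card Fq : ℝ) ^ p.natDegree :=
  if_neg hp.ne_zero

noncomputable def primeWeight (s : Finset Fq[X]) : ℝ :=
  ∏ P ∈ s, pnorm P / (pnorm P + 1)

noncomputable def signedWeight (u : Finset Fq[X]) : ℝ :=
  ∏ P ∈ u, -(pnorm P + 1)⁻¹

theorem am_eq_primeWeight {m : Fq[X]} (hm : m ≠ 0) : am m = primeWeight (primeFactors m) := by
  rw [am, primeWeight, ← finprod_mem_coe_finset]
  congr! with P
  rw [mem_coe, mem_primeFactors_iff hm]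
  tauto

theorem am_mul {w l : Fq[X]} (hw : w ≠ 0) (hl : l ≠ 0) :
    am (w * l) = am w * primeWeight (primeFactors l \ primeFactors w) := by
  rw [am_eq_primeWeight (mul_ne_zero hw hl),
    UniqueFactorizationMonoid.primeFactors_mul_eq_union hw hl, ← union_sdiff_self_eq_union,
    primeWeight, prod_union disjoint_sdiff, am_eq_primeWeight hw]
  rfl

theorem primeWeight_eq_sum_powerset (s : Finset Fq[X]) :
    primeWeight s = ∑ u ∈ s.powerset, signedWeight u := by
  simp only [primeWeight, signedWeight, ← prod_one_add]
  refine prod_congr rfl fun P _ => ?_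
  have := pnorm_nonneg P
  field_simp
  ring

noncomputable def primeSetsOfDegree (w : Fq[X]) (d : ℕ) : Finset (Finset Fq[X]) :=
  ((monicUpTo Fq d).filter fun P => Irreducible P ∧ P ∉ primeFactors w).powerset.filter
    fun u => (∏ P ∈ u, P).natDegree = d

theorem mem_primeSetsOfDegree {w : Fq[X]} {d : ℕ} {u : Finset Fq[X]} :
    u ∈ primeSetsOfDegree w d ↔
      (∀ P ∈ u, P.Monic ∧ Irreducible P ∧ P ∉ primeFactors w) ∧ (∏ P ∈ u, P).natDegree = d := by
  simp only [primeSetsOfDegree, mem_filter, mem_powerset, subset_iff, mem_monicUpTo]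
  constructor
  · rintro ⟨hu, hd⟩
    exact ⟨fun P hP => ⟨(hu hP).1.1, (hu hP).2⟩, hd⟩
  · rintro ⟨hu, rfl⟩
    exact ⟨fun P hP => ⟨⟨(hu P hP).1,
      natDegree_le_natDegree_prod (fun Q hQ => (hu Q hQ).1) hP⟩, (hu P hP).2⟩, rfl⟩

theorem primeSetsOfDegree_zero (w : Fq[X]) : primeSetsOfDegree w 0 = {∅} := by
  ext u
  rw [mem_primeSetsOfDegree, mem_singleton]
  constructor
  · rintro ⟨hu, hdeg⟩
    refine eq_empty_of_forall_notMem fun P hP => ?_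
    have := natDegree_le_natDegree_prod (fun Q hQ => (hu Q hQ).1) hP
    have := (hu P hP).2.1.natDegree_pos
    omega
  · rintro rfl
    simp

theorem card_primeSetsOfDegree_le (w : Fq[X]) (d : ℕ) :
    #(primeSetsOfDegree w d) ≤ Fintype.card Fq ^ d := by
  rw [← card_monicOfDegree]
  refine card_le_card_of_injOn (fun u => ∏ P ∈ u, P) (fun u hu => ?_) fun u hu v hv huv => ?_
  · obtain ⟨hu, hd⟩ := mem_primeSetsOfDegree.mp hu
    exact mem_monicOfDegree.mpr ⟨monic_prod_of_monic u id fun P hP => (hu P hP).1, hd⟩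
  · have normalized {u} (hu : u ∈ primeSetsOfDegree w d) :
        ∀ P ∈ u, Irreducible P ∧ normalize P = P := fun P hP =>
      have hP := (mem_primeSetsOfDegree.mp hu).1 P hP
      ⟨hP.2.1, hP.1.normalize_eq_self⟩
    rw [← primeFactors_prod_of_normalized (normalized hu),
      ← primeFactors_prod_of_normalized (normalized hv)]
    exact congrArg primeFactors huv

theorem abs_signedWeight_le {w : Fq[X]} {d : ℕ} (hd : d ≠ 0) {u : Finset Fq[X]}
    (hu : u ∈ primeSetsOfDegree w d) :
    |signedWeight u| ≤ ((Fintype.card Fq : ℝ) ^ d + 1)⁻¹ := by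
  obtain ⟨hu, hdeg⟩ := mem_primeSetsOfDegree.mp hu
  have hne : u.Nonempty := by
    rw [nonempty_iff_ne_empty]
    rintro rfl
    simp at hdeg
    omega
  have hpnorm : ∏ P ∈ u, pnorm P = (Fintype.card Fq : ℝ) ^ d := by
    rw [← hdeg, natDegree_prod_of_monic u (fun P => P) fun P hP => (hu P hP).1,
      ← prod_pow_eq_pow_sum]
    exact prod_congr rfl fun P hP => pnorm_of_monic (hu P hP).1
  have habs : |signedWeight u| = (∏ P ∈ u, (pnorm P + 1))⁻¹ := by
    rw [signedWeight, abs_prod, ← prod_inv_distrib]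
    refine prod_congr rfl fun P _ => ?_
    rw [abs_neg, abs_inv, abs_of_pos (by linarith [pnorm_nonneg P])]
  rw [habs]
  exact inv_anti₀ (by positivity)
    (hpnorm ▸ add_one_le_prod_add_one hne fun P _ => pnorm_nonneg P)

theorem powerset_primeFactors_sdiff_eq_filter {w l : Fq[X]} {n : ℕ}
    (hl : l ∈ monicOfDegree Fq n) :
    (primeFactors l \ primeFactors w).powerset =
      ((range (n + 1)).biUnion (primeSetsOfDegree w)).filter
        (· ⊆ primeFactors l \ primeFactors w) := by
  obtain ⟨hmonic, rfl⟩ := mem_monicOfDegree.mp hl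
  ext u
  simp only [mem_powerset, mem_filter, mem_biUnion, mem_range]
  refine ⟨fun hsub => ⟨?_, hsub⟩, And.right⟩
  have hu : ∀ P ∈ u, P.Monic ∧ Irreducible P ∧ P ∉ primeFactors w := fun P hP => by
    obtain ⟨hPl, hPw⟩ := mem_sdiff.mp (hsub hP)
    obtain ⟨hirr, hmon, _⟩ := (mem_primeFactors_iff hmonic.ne_zero).mp hPl
    exact ⟨hmon, hirr, hPw⟩
  have hdvd := (subset_primeFactors_sdiff_iff hmonic.ne_zero hu).mp hsub
  exact ⟨_, Nat.lt_succ_of_le (natDegree_le_of_dvd hdvd hmonic.ne_zero),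
    mem_primeSetsOfDegree.mpr ⟨hu, rfl⟩⟩

theorem card_filter_subset_primeFactors_sdiff {w : Fq[X]} {d n : ℕ} (hdn : d ≤ n)
    {u : Finset Fq[X]} (hu : u ∈ primeSetsOfDegree w d) :
    #((monicOfDegree Fq n).filter (u ⊆ primeFactors · \ primeFactors w)) =
      Fintype.card Fq ^ (n - d) := by
  obtain ⟨hprimes, rfl⟩ := mem_primeSetsOfDegree.mp hu
  rw [← card_filter_dvd_monicOfDegree
    (monic_prod_of_monic u (fun P => P) fun P hP => (hprimes P hP).1) hdn]
  congr 1
  exact filter_congr fun l hl =>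
    subset_primeFactors_sdiff_iff (mem_monicOfDegree.mp hl).1.ne_zero hprimes

noncomputable def densityTerm (w : Fq[X]) (d : ℕ) : ℝ :=
  (∑ u ∈ primeSetsOfDegree w d, signedWeight u) / (Fintype.card Fq : ℝ) ^ d

theorem sum_primeWeight_monicOfDegree (w : Fq[X]) (n : ℕ) :
    ∑ l ∈ monicOfDegree Fq n, primeWeight (primeFactors l \ primeFactors w) =
      (Fintype.card Fq : ℝ) ^ n * ∑ d ∈ range (n + 1), densityTerm w d := by
  set T := (range (n + 1)).biUnion (primeSetsOfDegree w)
  have hdisj : (range (n + 1) : Set ℕ).PairwiseDisjoint (primeSetsOfDegree w) :=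
    fun d _ e _ hde => disjoint_left.mpr fun _ hd he =>
      hde ((mem_primeSetsOfDegree.mp hd).2.symm.trans (mem_primeSetsOfDegree.mp he).2)
  calc ∑ l ∈ monicOfDegree Fq n, primeWeight (primeFactors l \ primeFactors w)
      = ∑ l ∈ monicOfDegree Fq n, ∑ u ∈ T.filter (· ⊆ primeFactors l \ primeFactors w),
          signedWeight u :=
        sum_congr rfl fun l hl => by
          rw [primeWeight_eq_sum_powerset, powerset_primeFactors_sdiff_eq_filter hl]
    _ = ∑ u ∈ T, ∑ _l ∈ (monicOfDegree Fq n).filter (u ⊆ primeFactors · \ primeFactors w),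
          signedWeight u :=
        sum_comm' fun l u => by simp only [mem_filter]; tauto
    _ = ∑ d ∈ range (n + 1), ∑ u ∈ primeSetsOfDegree w d,
          (Fintype.card Fq : ℝ) ^ (n - d) * signedWeight u := by
        rw [sum_biUnion hdisj]
        refine sum_congr rfl fun d hd => sum_congr rfl fun u hu => ?_
        rw [sum_const, card_filter_subset_primeFactors_sdiff (mem_range_succ_iff.mp hd) hu,
          nsmul_eq_mul]
        push_cast; rfl
    _ = (Fintype.card Fq : ℝ) ^ n * ∑ d ∈ range (n + 1), densityTerm w d := by
        rw [mul_sum]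
        refine sum_congr rfl fun d hd => ?_
        rw [densityTerm, ← pow_mul_pow_sub _ (mem_range_succ_iff.mp hd), ← mul_sum]
        field_simp

theorem densityTerm_zero (w : Fq[X]) : densityTerm w 0 = 1 := by
  simp [densityTerm, primeSetsOfDegree_zero, signedWeight]

theorem abs_densityTerm_le (w : Fq[X]) {d : ℕ} (hd : d ≠ 0) :
    |densityTerm w d| ≤ ((2 : ℝ) ^ d + 1)⁻¹ := by
  have hq : (2 : ℝ) ≤ Fintype.card Fq := by exact_mod_cast Fintype.one_lt_card (α := Fq)
  have hcard : (#(primeSetsOfDegree w d) : ℝ) ≤ (Fintype.card Fq : ℝ) ^ d := by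
    exact_mod_cast card_primeSetsOfDegree_le w d
  set q := (Fintype.card Fq : ℝ)
  have hqd : 0 < q ^ d := by positivity
  calc |densityTerm w d|
      ≤ (∑ u ∈ primeSetsOfDegree w d, |signedWeight u|) / q ^ d := by
        rw [densityTerm, abs_div, abs_of_pos hqd]
        exact div_le_div_of_nonneg_right (abs_sum_le_sum_abs _ _) hqd.le
    _ ≤ q ^ d * (q ^ d + 1)⁻¹ / q ^ d := by
        gcongr
        exact (sum_le_card_nsmul _ _ _ fun u hu => abs_signedWeight_le hd hu).trans
          (by rw [nsmul_eq_mul]; gcongr)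
    _ = (q ^ d + 1)⁻¹ := by field_simp
    _ ≤ ((2 : ℝ) ^ d + 1)⁻¹ := by gcongr

theorem finsum_am_mul_div_pnorm {w : Fq[X]} (hw : w.Monic) (N : ℕ) :
    ∑ᶠ l ∈ {l : Fq[X] | l.Monic ∧ l.natDegree ≤ N}, am (w * l) / pnorm l =
      am w * ∑ n ∈ range (N + 1), ∑ d ∈ range (n + 1), densityTerm w d := by
  have hset : {l : Fq[X] | l.Monic ∧ l.natDegree ≤ N} = ↑(monicUpTo Fq N) := by
    ext l; simp [mem_monicUpTo]
  have hdisj : (range (N + 1) : Set ℕ).PairwiseDisjoint (monicOfDegree Fq) :=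
    fun n _ m _ hnm => disjoint_left.mpr fun _ hn hm =>
      hnm ((mem_monicOfDegree.mp hn).2.symm.trans (mem_monicOfDegree.mp hm).2)
  rw [hset, finsum_mem_coe_finset, monicUpTo, sum_biUnion hdisj, mul_sum]
  refine sum_congr rfl fun n _ => ?_
  have hqn : (Fintype.card Fq : ℝ) ^ n ≠ 0 := by positivity
  calc ∑ l ∈ monicOfDegree Fq n, am (w * l) / pnorm l
      = ∑ l ∈ monicOfDegree Fq n,
          am w * primeWeight (primeFactors l \ primeFactors w) / (Fintype.card Fq : ℝ) ^ n :=
        sum_congr rfl fun l hl => by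
          obtain ⟨hmonic, hdeg⟩ := mem_monicOfDegree.mp hl
          rw [am_mul hw.ne_zero hmonic.ne_zero, pnorm_of_monic hmonic, hdeg, mul_div_assoc]
    _ = am w * ∑ d ∈ range (n + 1), densityTerm w d := by
        rw [← sum_div, ← mul_sum, sum_primeWeight_monicOfDegree]
        field_simp

/-- `Σ_{l monic, deg l ≤ (g - deg r)/2} a_{rhl}/|l| ∼ C(r,h) a_{rh} g`
with `C(r,h)` uniformly bounded away from `0`. -/
theorem l_sum_asymptotic :
    ∃ c₀ : ℝ, 0 < c₀ ∧
      ∀ r h : Polynomial Fq, r.Monic → h.Monic → Squarefree r →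
        ∃ C : ℝ, c₀ ≤ C ∧
          (fun g : ℕ => ∑ᶠ l ∈ {l : Polynomial Fq | l.Monic ∧ l.natDegree ≤ (g - r.natDegree) / 2},
              am (r * h * l) / pnorm l)
            ~[atTop]
          (fun g : ℕ => C * am (r * h) * (g : ℝ)) := by
  refine ⟨1 / 12, by norm_num, fun r h hr hh _ => ?_⟩
  have hbound (d : ℕ) (hd : d ≠ 0) := abs_densityTerm_le (r * h) hd
  have hsummable := summable_of_abs_le_inv_two_pow_add_one (by simp [densityTerm_zero]) hbound
  set c := ∑' d, densityTerm (r * h) d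
  have hc : 1 / 6 ≤ c := one_sixth_le_tsum_of_abs_le (densityTerm_zero _) hbound
  have hmean : Tendsto (fun n => ∑ d ∈ range (n + 1), densityTerm (r * h) d) atTop (nhds c) :=
    hsummable.hasSum.tendsto_sum_nat.comp (tendsto_add_atTop_nat 1)
  have hlength : Tendsto (fun g : ℕ => (g - r.natDegree) / 2 + 1) atTop atTop :=
    tendsto_atTop_atTop.mpr fun b => ⟨2 * b + r.natDegree, fun g hg => by omega⟩
  refine ⟨c / 2, by linarith, ?_⟩
  simp_rw [finsum_am_mul_div_pnorm (hr.mul hh)]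
  calc (fun g : ℕ => am (r * h) * ∑ n ∈ range ((g - r.natDegree) / 2 + 1),
          ∑ d ∈ range (n + 1), densityTerm (r * h) d)
      ~[atTop] fun g => am (r * h) * (c * (((g - r.natDegree) / 2 + 1 : ℕ) : ℝ)) :=
        IsEquivalent.refl.mul
          ((sum_range_isEquivalent_of_tendsto (by linarith) hmean).comp_tendsto hlength)
    _ ~[atTop] fun g => am (r * h) * (c * ((g : ℝ) / 2)) :=
        IsEquivalent.refl.mul (IsEquivalent.refl.mul (natCast_sub_div_two_add_one_isEquivalent _))
    _ = fun g : ℕ => c / 2 * am (r * h) * (g : ℝ) := by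
        funext g
        ring
end
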